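/- Let G : ℝ^M → ℝ and, for n = 1,…,N, let Aₙ, Bₙ : ℝ^M → ℝ be differentiable with Aₙ(x) > 0 and Bₙ(x) > 0. Define H(x) = G(x) + Σₙ Aₙ(x)/Bₙ(x) and W(x, y) = G(x) + Σₙ ([Aₙ(x)]²yₙ + 1/(4[Bₙ(x)]²yₙ)) for y ∈ (0,∞)^N. Suppose (x*, y*) satisfies: (a) y* minimizes y ↦ W(x*, y) over (0,∞)^N (equivalently yₙ* = 1/(2Aₙ(x*)Bₙ(x*)) for all n), and (b) ∇ₓW(x*, y*) = 0. Then ∇H(x*) = 0 and W(x*, y*) = H(x*). -/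

import Mathlib

open Set

/-!
With `yₙ* = 1/(2Aₙ(x*)Bₙ(x*))` fixed, completing the square gives the identity
`W(x, y*) = H(x) + Σₙ yₙ* (Aₙ(x) - 1/(2Bₙ(x)yₙ*))²` for every `x`.
Each square vanishes at `x*`, so the penalty term has value and derivative `0` there:
`W(·, y*)` and `H` agree to first order at `x*`.
-/

section

variable {E F : Type*} [NormedAddCommGroup E] [NormedSpace ℝ E]
  [NormedAddCommGroup F] [NormedSpace ℝ F]

lemma fderiv_add_of_hasFDerivAt_zero {f g : E → F} {x : E} (hg : HasFDerivAt g (0 : E →L[ℝ] F) x) :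
    fderiv ℝ (fun z => f z + g z) x = fderiv ℝ f x := by
  by_cases hf : DifferentiableAt ℝ f x
  · rw [fderiv_fun_add hf hg.differentiableAt, hg.fderiv, add_zero]
  · have hfg : ¬DifferentiableAt ℝ (fun z => f z + g z) x := by
      rwa [DifferentiableAt.fun_add_iff_left hg.differentiableAt]
    rw [fderiv_zero_of_not_differentiableAt hf, fderiv_zero_of_not_differentiableAt hfg]

lemma hasFDerivAt_const_mul_sq_of_eq_zero {f : E → ℝ} {x : E} (c : ℝ)
    (hf : DifferentiableAt ℝ f x) (h0 : f x = 0) :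
    HasFDerivAt (fun z => c * f z ^ 2) (0 : E →L[ℝ] ℝ) x := by
  simpa [h0] using (hf.hasFDerivAt.pow 2).const_mul c

end

lemma sq_mul_add_one_div_eq_div_add_mul_sq {a b c : ℝ} (hc : c ≠ 0) :
    a ^ 2 * c + 1 / (4 * b ^ 2 * c) = a / b + c * (a - 1 / (2 * b * c)) ^ 2 := by
  rcases eq_or_ne b 0 with rfl | hb
  · simp [mul_comm]
  · field_simp
    ring

lemma sub_one_div_eq_zero_of_eq_one_div {a b c : ℝ} (hb : b ≠ 0)
    (hc : c = 1 / (2 * a * b)) : a - 1 / (2 * b * c) = 0 := by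
  rw [hc]
  field_simp
  ring

theorem fp_surrogate_stationary_general
    (M N : ℕ) (G : EuclideanSpace ℝ (Fin M) → ℝ)
    (A B : Fin N → EuclideanSpace ℝ (Fin M) → ℝ)
    (hA : ∀ n, Differentiable ℝ (A n)) (hB : ∀ n, Differentiable ℝ (B n))
    (hApos : ∀ n x, 0 < A n x) (hBpos : ∀ n x, 0 < B n x)
    (xstar : EuclideanSpace ℝ (Fin M)) (ystar : Fin N → ℝ)
    (hy : ∀ n, ystar n = 1 / (2 * A n xstar * B n xstar))
    (hstat : fderiv ℝ
        (fun x => G x + ∑ n : Fin N,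
          ((A n x) ^ 2 * ystar n + 1 / (4 * (B n x) ^ 2 * ystar n))) xstar = 0) :
    fderiv ℝ (fun x => G x + ∑ n : Fin N, A n x / B n x) xstar = 0 ∧
    (G xstar + ∑ n : Fin N,
        ((A n xstar) ^ 2 * ystar n + 1 / (4 * (B n xstar) ^ 2 * ystar n)))
      = G xstar + ∑ n : Fin N, A n xstar / B n xstar := by
  have hA0 n : A n xstar ≠ 0 := (hApos n xstar).ne'
  have hB0 n : B n xstar ≠ 0 := (hBpos n xstar).ne'
  have hy0 n : ystar n ≠ 0 := by simp [hy n, hA0, hB0]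
  set gap := fun n x => A n x - 1 / (2 * B n x * ystar n) with hgap_def
  have hgap n : gap n xstar = 0 := sub_one_div_eq_zero_of_eq_one_div (hB0 n) (hy n)
  have hsplit : (fun x => G x + ∑ n : Fin N,
        ((A n x) ^ 2 * ystar n + 1 / (4 * (B n x) ^ 2 * ystar n))) =
      fun x => (G x + ∑ n : Fin N, A n x / B n x) + ∑ n : Fin N, ystar n * gap n x ^ 2 := by
    funext x
    simp only [sq_mul_add_one_div_eq_div_add_mul_sq (hy0 _), Finset.sum_add_distrib, hgap_def]
    ring
  have hpenalty : HasFDerivAt (fun x => ∑ n : Fin N, ystar n * gap n x ^ 2)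
      (0 : EuclideanSpace ℝ (Fin M) →L[ℝ] ℝ) xstar := by
    have hdiff n : DifferentiableAt ℝ (gap n) xstar := by
      simp only [hgap_def]
      fun_prop (disch := exact mul_ne_zero (mul_ne_zero two_ne_zero (hB0 n)) (hy0 n))
    simpa using HasFDerivAt.fun_sum fun n _ =>
      hasFDerivAt_const_mul_sq_of_eq_zero (ystar n) (hdiff n) (hgap n)
  refine ⟨?_, ?_⟩
  · rw [← hstat, hsplit, fderiv_add_of_hasFDerivAt_zero hpenalty]
  · rw [congrFun hsplit xstar]
    simp [hgap]

/-- Fixed points of the alternating minimization of the FP surrogate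
`W(x,y) = G(x) + Σₙ (Aₙ(x)²·yₙ + 1/(4·Bₙ(x)²·yₙ))` are stationary points of the
original sum-of-ratios objective `H(x) = G(x) + Σₙ Aₙ(x)/Bₙ(x)`, and the surrogate
value agrees with the original value at such points. -/
theorem fp_surrogate_stationary
    (M N : ℕ) (G : EuclideanSpace ℝ (Fin M) → ℝ)
    (A B : Fin N → EuclideanSpace ℝ (Fin M) → ℝ)
    (hG : Differentiable ℝ G)
    (hA : ∀ n, Differentiable ℝ (A n)) (hB : ∀ n, Differentiable ℝ (B n))
    (hApos : ∀ n x, 0 < A n x) (hBpos : ∀ n x, 0 < B n x)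
    (xstar : EuclideanSpace ℝ (Fin M)) (ystar : Fin N → ℝ)
    (hy : ∀ n, ystar n = 1 / (2 * A n xstar * B n xstar))
    (hstat : fderiv ℝ
        (fun x => G x + ∑ n : Fin N,
          ((A n x) ^ 2 * ystar n + 1 / (4 * (B n x) ^ 2 * ystar n))) xstar = 0) :
    fderiv ℝ (fun x => G x + ∑ n : Fin N, A n x / B n x) xstar = 0 ∧
    (G xstar + ∑ n : Fin N,
        ((A n xstar) ^ 2 * ystar n + 1 / (4 * (B n xstar) ^ 2 * ystar n)))
      = G xstar + ∑ n : Fin N, A n xstar / B n xstar :=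
  fp_surrogate_stationary_general M N G A B hA hB hApos hBpos xstar ystar hy hstat
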